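/- (Bounded toll iterates.) If 2γ‖A‖² ≤ α, then for every k ∈ ℕ, ‖τ^k − τ⋆‖² ≤ ‖τ⁰ − τ⋆‖² + 4γ·E^k, where E^k = ∑_{s=0}^{k-1} ε^s. -/

import Mathlib

/-!
Let `w τ` be the exact minimiser of the tolled potential on `Y`. Strong convexity gives quadratic
growth around `w τ`, so an `ε`-equilibrium `y` satisfies `α/2 ‖y - w τ‖² ≤ ε`, and `A y - b` is an
`ε`-supergradient of the concave dual function `d`. The toll update is a projected step onto the
nonnegative orthant, whose three-point inequality gives
`‖τ' - τ⋆‖² ≤ ‖τ - τ⋆‖² + 2γ⟪A y - b, τ' - τ⋆⟫ - ‖τ' - τ‖²`. The curvature of `d` (the same growth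
estimate at `w τ'`) together with `2γ‖A‖² ≤ α` absorbs the error `‖A‖ ‖y - w τ'‖ ‖τ' - τ‖`, so each
step increases the squared distance to `τ⋆` by at most `4γε`.
-/

open scoped RealInnerProductSpace
open Filter Topology

section StrongConvexity

variable {E : Type*} [NormedAddCommGroup E] [NormedSpace ℝ E] {s : Set E} {m : ℝ} {f g : E → ℝ}

theorem StrongConvexOn.add_convexOn (hf : StrongConvexOn s m f) (hg : ConvexOn ℝ s g) :
    StrongConvexOn s m (f + g) := by
  simpa [StrongConvexOn] using hf.add hg.uniformConvexOn_zero

theorem StrongConvexOn.add_sq_norm_sub_le_of_isMinOn (hf : StrongConvexOn s m f) {x y : E}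
    (hx : x ∈ s) (hy : y ∈ s) (hmin : IsMinOn f s x) : f x + m / 2 * ‖y - x‖ ^ 2 ≤ f y := by
  set K := m / 2 * ‖y - x‖ ^ 2
  have hseg : ∀ t ∈ Set.Ioo (0 : ℝ) 1, (1 - t) * K ≤ f y - f x := by
    rintro t ⟨ht₀, ht₁⟩
    have hconv : f (t • y + (1 - t) • x) ≤ t * f y + (1 - t) * f x - t * (1 - t) * K :=
      hf.2 hy hx ht₀.le (sub_nonneg.2 ht₁.le) (add_sub_cancel t 1)
    have hle : f x ≤ f (t • y + (1 - t) • x) :=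
      hmin (hf.1 hy hx ht₀.le (sub_nonneg.2 ht₁.le) (add_sub_cancel t 1))
    refine le_of_mul_le_mul_left ?_ ht₀
    nlinarith
  have hlim : Tendsto (fun t : ℝ => (1 - t) * K) (𝓝[>] 0) (𝓝 K) := by
    have : Tendsto (fun t : ℝ => (1 - t) * K) (𝓝 0) (𝓝 ((1 - 0) * K)) :=
      ((continuous_const.sub continuous_id).mul continuous_const).tendsto 0
    simpa using this.mono_left nhdsWithin_le_nhds
  have := le_of_tendsto hlim (eventually_of_mem (Ioo_mem_nhdsGT one_pos) hseg)
  linarith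

end StrongConvexity

theorem inner_sub_sub_nonpos_of_eq_max_zero {κ : Type*} [Fintype κ]
    {v u p : EuclideanSpace ℝ κ} (hu : ∀ i, u i = max (v i) 0) (hp : ∀ i, 0 ≤ p i) :
    ⟪v - u, p - u⟫ ≤ 0 := by
  rw [PiLp.inner_apply]
  refine Finset.sum_nonpos fun i _ => ?_
  simp only [PiLp.sub_apply, hu i, RCLike.inner_apply, conj_trivial]
  rcases le_total (v i) 0 with h | h
  · rw [max_eq_right h]; nlinarith [hp i]
  · rw [max_eq_left h]; simp

theorem norm_sub_sq_le_of_inner_sub_sub_nonpos {F : Type*} [NormedAddCommGroup F]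
    [InnerProductSpace ℝ F] {τ τ' g p : F} {γ : ℝ}
    (h : ⟪τ + γ • g - τ', p - τ'⟫ ≤ 0) :
    ‖τ' - p‖ ^ 2 ≤ ‖τ - p‖ ^ 2 + 2 * γ * ⟪g, τ' - p⟫ - ‖τ' - τ‖ ^ 2 := by
  have hsplit : τ' - p = (τ - p) + (τ' - τ) := by abel
  have hh : ⟪τ' - τ, τ' - p⟫ ≤ γ * ⟪g, τ' - p⟫ := by
    have : τ + γ • g - τ' = γ • g - (τ' - τ) := by abel
    rw [this, ← neg_sub τ' p, inner_neg_right, inner_sub_left, real_inner_smul_left] at h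
    linarith
  have h2 : ⟪τ' - τ, τ' - p⟫ = ⟪τ - p, τ' - τ⟫ + ‖τ' - τ‖ ^ 2 := by
    rw [hsplit, inner_add_right, real_inner_self_eq_norm_sq, real_inner_comm]
  rw [hsplit, norm_add_sq_real] at *
  linarith

section TolledPotential

variable {E F : Type*} [NormedAddCommGroup E] [NormedSpace ℝ E] [NormedAddCommGroup F]
  [InnerProductSpace ℝ F] (Y : Set E) (F₀ : E → ℝ) (A : E →L[ℝ] F) (b : F)

def tolledPotential (y : E) (τ : F) : ℝ := F₀ y + ⟪τ, A y - b⟫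

noncomputable def dualFunction (τ : F) : ℝ := sInf ((tolledPotential F₀ A b · τ) '' Y)

variable {Y F₀ A b} {α : ℝ}

theorem tolledPotential_eq_add_inner (y : E) (σ τ : F) :
    tolledPotential F₀ A b y σ = tolledPotential F₀ A b y τ + ⟪σ - τ, A y - b⟫ := by
  simp only [tolledPotential, inner_sub_left]
  ring

theorem Continuous.tolledPotential (hcont : Continuous F₀) (τ : F) :
    Continuous (tolledPotential F₀ A b · τ) := by
  unfold _root_.tolledPotential
  fun_prop

theorem StrongConvexOn.tolledPotential (hsc : StrongConvexOn Y α F₀) (τ : F) :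
    StrongConvexOn Y α (tolledPotential F₀ A b · τ) := by
  have hlin : ConvexOn ℝ Y fun y => ⟪τ, A y - b⟫ := by
    refine ⟨hsc.1, fun x _ y _ s t _ _ hst => le_of_eq ?_⟩
    simp only [map_add, map_smul, smul_eq_mul, inner_sub_right, inner_add_right,
      real_inner_smul_right]
    linear_combination ⟪τ, b⟫ * hst
  exact hsc.add_convexOn hlin

theorem exists_isMinOn_tolledPotential (hYne : Y.Nonempty) (hYcpt : IsCompact Y)
    (hcont : Continuous F₀) (τ : F) : ∃ w ∈ Y, IsMinOn (tolledPotential F₀ A b · τ) Y w :=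
  hYcpt.exists_isMinOn hYne (hcont.tolledPotential τ).continuousOn

theorem dualFunction_eq_of_isMinOn {τ : F} {w : E} (hw : w ∈ Y)
    (hmin : IsMinOn (tolledPotential F₀ A b · τ) Y w) :
    dualFunction Y F₀ A b τ = tolledPotential F₀ A b w τ :=
  (hmin.isGLB hw).csInf_eq ⟨_, w, hw, rfl⟩

theorem dualFunction_le_tolledPotential (hYcpt : IsCompact Y) (hcont : Continuous F₀)
    {y : E} (hy : y ∈ Y) (τ : F) :
    dualFunction Y F₀ A b τ ≤ tolledPotential F₀ A b y τ :=
  csInf_le (hYcpt.bddBelow_image (hcont.tolledPotential τ).continuousOn) ⟨y, hy, rfl⟩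

theorem dualFunction_add_sq_norm_sub_le (hsc : StrongConvexOn Y α F₀) {τ : F} {w y : E}
    (hw : w ∈ Y) (hmin : IsMinOn (tolledPotential F₀ A b · τ) Y w) (hy : y ∈ Y) :
    dualFunction Y F₀ A b τ + α / 2 * ‖y - w‖ ^ 2 ≤ tolledPotential F₀ A b y τ := by
  rw [dualFunction_eq_of_isMinOn hw hmin]
  exact (hsc.tolledPotential τ).add_sq_norm_sub_le_of_isMinOn hw hy hmin

theorem dualFunction_le_add_inner_add (hYcpt : IsCompact Y) (hcont : Continuous F₀)
    {τ : F} {y : E} {ε : ℝ} (hy : y ∈ Y)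
    (hyε : tolledPotential F₀ A b y τ ≤ dualFunction Y F₀ A b τ + ε) (σ : F) :
    dualFunction Y F₀ A b σ ≤ dualFunction Y F₀ A b τ + ⟪σ - τ, A y - b⟫ + ε := by
  have hσ := dualFunction_le_tolledPotential (A := A) (b := b) hYcpt hcont hy σ
  rw [tolledPotential_eq_add_inner y σ τ] at hσ
  linarith

theorem dualFunction_add_inner_add_sq_norm_sub_le (hsc : StrongConvexOn Y α F₀) {τ τ' : F}
    {w w' : E} (hw : w ∈ Y) (hmin : IsMinOn (tolledPotential F₀ A b · τ) Y w) (hw' : w' ∈ Y)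
    (hmin' : IsMinOn (tolledPotential F₀ A b · τ') Y w') :
    dualFunction Y F₀ A b τ + ⟪τ' - τ, A w' - b⟫ + α / 2 * ‖w' - w‖ ^ 2
      ≤ dualFunction Y F₀ A b τ' := by
  rw [dualFunction_eq_of_isMinOn hw' hmin', tolledPotential_eq_add_inner w' τ' τ]
  linarith [dualFunction_add_sq_norm_sub_le hsc hw hmin hw']

end TolledPotential

theorem norm_toll_update_sub_sq_le {E κ : Type*} [NormedAddCommGroup E] [NormedSpace ℝ E]
    [Fintype κ] {Y : Set E} {F₀ : E → ℝ} {A : E →L[ℝ] EuclideanSpace ℝ κ}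
    {b : EuclideanSpace ℝ κ} {α γ ε : ℝ} (hYne : Y.Nonempty) (hYcpt : IsCompact Y)
    (hcont : Continuous F₀) (hsc : StrongConvexOn Y α F₀) (hγ : 0 ≤ γ)
    (hstep : 2 * γ * ‖A‖ ^ 2 ≤ α) {τ τ' p : EuclideanSpace ℝ κ} {y : E} (hy : y ∈ Y)
    (hyε : tolledPotential F₀ A b y τ ≤ dualFunction Y F₀ A b τ + ε)
    (hτ' : ∀ i, τ' i = max (τ i + γ * (A y - b) i) 0) (hp : ∀ i, 0 ≤ p i)
    (hdp : dualFunction Y F₀ A b τ' ≤ dualFunction Y F₀ A b p) :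
    ‖τ' - p‖ ^ 2 ≤ ‖τ - p‖ ^ 2 + 4 * γ * ε := by
  obtain ⟨w, hw, hmin⟩ := exists_isMinOn_tolledPotential (A := A) (b := b) hYne hYcpt hcont τ
  obtain ⟨w', hw', hmin'⟩ :=
    exists_isMinOn_tolledPotential (A := A) (b := b) hYne hYcpt hcont τ'
  set m := ‖y - w‖
  set r := ‖w' - w‖
  set q := ‖τ' - τ‖
  have hthree : ‖τ' - p‖ ^ 2 ≤ ‖τ - p‖ ^ 2 + 2 * γ * ⟪A y - b, τ' - p⟫ - q ^ 2 :=
    norm_sub_sq_le_of_inner_sub_sub_nonpos <|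
      inner_sub_sub_nonpos_of_eq_max_zero (fun i => by simpa using hτ' i) hp
  have hsuper := dualFunction_le_add_inner_add hYcpt hcont hy hyε p
  have hcurv := dualFunction_add_inner_add_sq_norm_sub_le hsc hw hmin hw' hmin'
  have hclose : α / 2 * m ^ 2 ≤ ε := by
    linarith [dualFunction_add_sq_norm_sub_le hsc hw hmin hy]
  have hcs : ⟪τ' - τ, A (y - w')⟫ ≤ ‖A‖ * (m + r) * q := by
    calc ⟪τ' - τ, A (y - w')⟫ ≤ q * ‖A (y - w')‖ := real_inner_le_norm _ _
      _ ≤ q * (‖A‖ * ‖y - w'‖) := by gcongr; exact A.le_opNorm _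
      _ ≤ q * (‖A‖ * (m + r)) := by
          gcongr
          calc ‖y - w'‖ = ‖(y - w) - (w' - w)‖ := by rw [sub_sub_sub_cancel_right]
            _ ≤ m + r := norm_sub_le _ _
      _ = ‖A‖ * (m + r) * q := by ring
  have hsplit : ⟪A y - b, τ' - p⟫
      = ⟪τ' - τ, A w' - b⟫ + ⟪τ' - τ, A (y - w')⟫ - ⟪p - τ, A y - b⟫ := by
    have hg : A y - b = (A w' - b) + A (y - w') := by rw [map_sub]; abel
    rw [← inner_add_right, ← hg, ← inner_sub_left, real_inner_comm]
    congr 1; abel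
  have hinner : ⟪A y - b, τ' - p⟫ ≤ ε - α / 2 * r ^ 2 + ‖A‖ * (m + r) * q := by
    linarith
  have hslack : 0 ≤ γ * ((α - 2 * γ * ‖A‖ ^ 2) * (m ^ 2 + r ^ 2)) := by
    have : 0 ≤ α - 2 * γ * ‖A‖ ^ 2 := by linarith
    positivity
  -- Young: 2γ‖A‖(m + r)q ≤ q² + γ²‖A‖²(m + r)² ≤ q² + γα(m² + r²).
  nlinarith [mul_le_mul_of_nonneg_left hinner hγ, mul_le_mul_of_nonneg_left hclose hγ,
    sq_nonneg (q - γ * ‖A‖ * (m + r)), sq_nonneg (γ * ‖A‖ * (m - r))]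

theorem stmt_8_general
    {ι κ : Type*} [Fintype ι] [Fintype κ]
    (Y : Set (EuclideanSpace ℝ ι)) (hYne : Y.Nonempty) (hYcpt : IsCompact Y)
    (α : ℝ)
    (F₀ : EuclideanSpace ℝ ι → ℝ) (hF₀cont : Continuous F₀)
    (hF₀sc : StrongConvexOn Y α F₀)
    (A : EuclideanSpace ℝ ι →L[ℝ] EuclideanSpace ℝ κ) (b : EuclideanSpace ℝ κ)
    (L : EuclideanSpace ℝ ι → EuclideanSpace ℝ κ → ℝ)
    (hL : ∀ y τ, L y τ = F₀ y + ⟪τ, A y - b⟫)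
    (d : EuclideanSpace ℝ κ → ℝ)
    (hd : ∀ τ, d τ = sInf ((fun y => L y τ) '' Y))
    (γ : ℝ) (hγ : 0 < γ)
    (τs : ℕ → EuclideanSpace ℝ κ) (ys : ℕ → EuclideanSpace ℝ ι) (εs : ℕ → ℝ)
    (hysY : ∀ s, ys s ∈ Y)
    (hyseq : ∀ s, L (ys s) (τs s) ≤ d (τs s) + εs s)
    (hupdate : ∀ s i, τs (s + 1) i = max (τs s i + γ * (A (ys s) - b) i) 0)
    (τstar : EuclideanSpace ℝ κ) (hτstarpos : ∀ i, 0 ≤ τstar i)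
    (hτstarmax : ∀ σ : EuclideanSpace ℝ κ, (∀ i, 0 ≤ σ i) → d σ ≤ d τstar)
    (hstep : 2 * γ * ‖A‖ ^ 2 ≤ α)
    :
    ∀ k : ℕ,
      ‖τs k - τstar‖ ^ 2 ≤ ‖τs 0 - τstar‖ ^ 2 + 4 * γ * ∑ s ∈ Finset.range k, εs s := by
  obtain rfl : L = tolledPotential F₀ A b := funext₂ hL
  obtain rfl : d = dualFunction Y F₀ A b := funext hd
  intro k
  induction k with
  | zero => simp
  | succ k ih =>
    have hτ_nonneg : ∀ i, 0 ≤ τs (k + 1) i := fun i => (hupdate k i).trans_ge (le_max_right _ _)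
    have hk := norm_toll_update_sub_sq_le hYne hYcpt hF₀cont hF₀sc hγ.le hstep (hysY k) (hyseq k)
      (hupdate k) hτstarpos (hτstarmax _ hτ_nonneg)
    rw [Finset.sum_range_succ]
    linarith [hk]

theorem stmt_8
    {ι κ : Type*} [Fintype ι] [Fintype κ] [Nonempty ι] [Nonempty κ]
    (Y : Set (EuclideanSpace ℝ ι)) (hYne : Y.Nonempty) (hYcpt : IsCompact Y)
    (hYconv : Convex ℝ Y)
    (α : ℝ) (hα : 0 < α)
    (F₀ : EuclideanSpace ℝ ι → ℝ) (hF₀cont : Continuous F₀)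
    (hF₀sc : StrongConvexOn Y α F₀)
    (A : EuclideanSpace ℝ ι →L[ℝ] EuclideanSpace ℝ κ) (b : EuclideanSpace ℝ κ)
    (L : EuclideanSpace ℝ ι → EuclideanSpace ℝ κ → ℝ)
    (hL : ∀ y τ, L y τ = F₀ y + ⟪τ, A y - b⟫)
    (d : EuclideanSpace ℝ κ → ℝ)
    (hd : ∀ τ, d τ = sInf ((fun y => L y τ) '' Y))
    (γ : ℝ) (hγ : 0 < γ)
    (τs : ℕ → EuclideanSpace ℝ κ) (ys : ℕ → EuclideanSpace ℝ ι) (εs : ℕ → ℝ)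
    (hτ0 : ∀ i, 0 ≤ τs 0 i)
    (hεs : ∀ s, 0 ≤ εs s)
    (hysY : ∀ s, ys s ∈ Y)
    (hyseq : ∀ s, L (ys s) (τs s) ≤ d (τs s) + εs s)
    (hupdate : ∀ s i, τs (s + 1) i = max (τs s i + γ * (A (ys s) - b) i) 0)
    (τstar : EuclideanSpace ℝ κ) (hτstarpos : ∀ i, 0 ≤ τstar i)
    (hτstarmax : ∀ σ : EuclideanSpace ℝ κ, (∀ i, 0 ≤ σ i) → d σ ≤ d τstar)
    (hstep : 2 * γ * ‖A‖ ^ 2 ≤ α)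
    :
    ∀ k : ℕ,
      ‖τs k - τstar‖ ^ 2 ≤ ‖τs 0 - τstar‖ ^ 2 + 4 * γ * ∑ s ∈ Finset.range k, εs s :=
  stmt_8_general Y hYne hYcpt α F₀ hF₀cont hF₀sc A b L hL d hd γ hγ τs ys εs hysY hyseq hupdate
    τstar hτstarpos hτstarmax hstep
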